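/- Hessian of the soft fixed point (Proposition 3.5): in the finite soft MOMDP setup with S = {s_1,…,s_p}, the map θ ↦ V(θ)(s) is twice differentiable on ℝ^n for each state s, and the n×n Hessian matrix of θ ↦ V(θ)(s_k) is H[V(θ)(s_k)] = (1/β) Σ_{l=1}^p [(I_p − γ T^{π_θ})^{-1}]_{kl} · B^{π_θ}(s_l), where π_θ is the softmax policy π_θ(a|s) = exp(Q_θ(s,a)/β)/Σ_{a'} exp(Q_θ(s,a')/β) with Q_θ(s,a) = ⟨θ, r(s,a)⟩ + γ Σ_{s'} T(s'|s,a)V(θ)(s'), T^{π_θ} is the p×p matrix with [T^{π_θ}]_{ij} = Σ_a π_θ(a|s_i) T(s_j|s_i,a), and B^{π_θ}(s) = Σ_a π_θ(a|s)·(Q^{π_θ}(s,a) − Q̄^{π_θ}(s))(Q^{π_θ}(s,a) − Q̄^{π_θ}(s))^⊤ is the covariance matrix of the vector action-values Q^{π_θ}(s,a) = r(s,a) + γ Σ_{s'} T(s'|s,a) w^{π_θ}(s') under π_θ(·|s), with Q̄^{π_θ}(s) = Σ_a π_θ(a|s)Q^{π_θ}(s,a) and w^{π_θ} the unique solution of w(s)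 = Σ_a π_θ(a|s)(r(s,a) + γ Σ_{s'} T(s'|s,a) w(s')). -/

import Mathlib

/-!
`V(θ)` is the fixed point of the soft Bellman operator, a `γ`-contraction in the sup norm that
depends smoothly on `θ`; the implicit function theorem for `v - T_θ v` therefore makes `θ ↦ V(θ)`
smooth. Differentiating `V(θ)(s) = β log Σₐ exp(Q_θ(s,a)/β)` in a direction `w` gives
`∂_w V(s) = Σₐ π_θ(a|s) ∂_w Q_θ(s,a)`: the directional derivative solves the policy-evaluation
equation of `π_θ` with reward `⟨w, r⟩`, so `∂_{e_i} V = w^π_i` and `∂_{e_i} Q_θ = Q^π_i`.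
Differentiating once more, the softmax weights contribute
`∂_u π(a|s) = π(a|s) (∂_u Q(s,a) - Σ_b π(b|s) ∂_u Q(s,b)) / β`, which produces the covariance
`B/β`; so the second derivative solves the policy-evaluation equation with reward `B/β`, and
inverting `I - γ T^π` gives the formula.
-/

open Finset
open Real (exp log exp_pos log_exp log_mul exp_add)
open scoped NNReal ContDiff Matrix

section Calculus

variable {E F : Type*} [NormedAddCommGroup E] [NormedSpace ℝ E]
  [NormedAddCommGroup F] [NormedSpace ℝ F]

theorem ContinuousLinearMap.isInvertible_id_sub_of_norm_lt_one [CompleteSpace F]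
    {L : F →L[ℝ] F} (hL : ‖L‖ < 1) : (ContinuousLinearMap.id ℝ F - L).IsInvertible := by
  obtain ⟨u, hu⟩ := isUnit_one_sub_of_norm_lt_one hL
  exact ⟨ContinuousLinearEquiv.unitsEquiv ℝ F u, by rw [← ContinuousLinearMap.one_def, ← hu]; rfl⟩

theorem contDiff_of_isFixedPt_of_lipschitzWith [CompleteSpace E] [CompleteSpace F]
    {Φ : E × F → F} {K : ℝ≥0} (hK : K < 1) {n : WithTop ℕ∞} (hn : n ≠ 0) (hΦ : ContDiff ℝ n Φ)
    (hlip : ∀ x, LipschitzWith K fun v => Φ (x, v)) {V : E → F}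
    (hV : ∀ x, Function.IsFixedPt (fun v => Φ (x, v)) (V x)) :
    ContDiff ℝ n V := by
  refine contDiff_iff_contDiffAt.2 fun x₀ => ?_
  have hf : ContDiffAt ℝ n (fun u : E × F => u.2 - Φ u) (x₀, V x₀) :=
    (contDiff_snd.sub hΦ).contDiffAt
  have hΦd : HasFDerivAt Φ (fderiv ℝ Φ (x₀, V x₀)) (x₀, V x₀) :=
    (hΦ.differentiable hn _).hasFDerivAt
  have hpartial : ‖fderiv ℝ Φ (x₀, V x₀) ∘L .inr ℝ E F‖ ≤ K :=
    (hΦd.comp (V x₀) (hasFDerivAt_prodMk_right x₀ (V x₀))).le_of_lipschitz (hlip x₀)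
  have hinv : (fderiv ℝ (fun u : E × F => u.2 - Φ u) (x₀, V x₀) ∘L .inr ℝ E F).IsInvertible := by
    have hcomp : (ContinuousLinearMap.snd ℝ E F - fderiv ℝ Φ (x₀, V x₀)) ∘L .inr ℝ E F =
        .id ℝ F - fderiv ℝ Φ (x₀, V x₀) ∘L .inr ℝ E F := by
      ext v
      simp
    rw [(hasFDerivAt_snd.fun_sub hΦd).fderiv, hcomp]
    exact ContinuousLinearMap.isInvertible_id_sub_of_norm_lt_one (hpartial.trans_lt hK)
  refine (hf.contDiffAt_implicitFunction hn hinv).congr_of_eventuallyEq ?_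
  filter_upwards [hf.eventually_apply_implicitFunction hn hinv] with x hx
  rw [sub_eq_zero.2 (hV x₀).symm, sub_eq_zero] at hx
  exact ContractingWith.fixedPoint_unique' ⟨hK, hlip x⟩ (hV x) hx.symm

theorem iteratedFDeriv_two_apply_eval {S : Type*} [Fintype S] {V : E → S → ℝ}
    (hV : ContDiff ℝ 2 V) (x u w : E) (s : S) :
    iteratedFDeriv ℝ 2 (fun y => V y s) x ![u, w] = fderiv ℝ (fun y => fderiv ℝ V y w) x u s := by
  have hVd : Differentiable ℝ V := hV.differentiable two_ne_zero
  have hDV : Differentiable ℝ fun y => fderiv ℝ V y w :=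
    ((hV.fderiv_right le_rfl).clm_apply contDiff_const).differentiable one_ne_zero
  have hDVs : Differentiable ℝ (fderiv ℝ fun y => V y s) :=
    (((contDiff_apply ℝ ℝ s).comp hV).fderiv_right le_rfl).differentiable one_ne_zero
  have hcomp : (fun y => fderiv ℝ (fun y => V y s) y w) = fun y => fderiv ℝ V y w s :=
    funext fun y => by rw [fderiv_apply (hVd y)]; rfl
  rw [iteratedFDeriv_two_apply]
  calc fderiv ℝ (fderiv ℝ fun y => V y s) x u w
      = fderiv ℝ (fun y => fderiv ℝ (fun y => V y s) y w) x u := by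
        rw [fderiv_clm_apply (hDVs x) (differentiableAt_const w)]
        simp
    _ = fderiv ℝ (fun y => fderiv ℝ V y w) x u s := by
        rw [hcomp, fderiv_apply (hDV x)]
        rfl

end Calculus

section Softmax

variable {A : Type*} [Fintype A]

noncomputable def logSumExp (β : ℝ) (q : A → ℝ) : ℝ := β * log (∑ a, exp (q a / β))

noncomputable def softmax (β : ℝ) (q : A → ℝ) (a : A) : ℝ := exp (q a / β) / ∑ b, exp (q b / β)

noncomputable def weightedCov (π x y : A → ℝ) : ℝ :=
  ∑ a, π a * ((x a - ∑ b, π b * x b) * (y a - ∑ b, π b * y b))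

theorem sum_mul_sub_mean_mul_eq_weightedCov {π : A → ℝ} (hπ : ∑ a, π a = 1) (x y : A → ℝ) :
    ∑ a, π a * ((x a - ∑ b, π b * x b) * y a) = weightedCov π x y := by
  have hcentered : ∑ a, π a * (x a - ∑ b, π b * x b) = 0 := by
    simp only [mul_sub, sum_sub_distrib, ← sum_mul, hπ, one_mul, sub_self]
  have hsplit : ∀ a, π a * ((x a - ∑ b, π b * x b) * y a) =
      π a * ((x a - ∑ b, π b * x b) * (y a - ∑ b, π b * y b)) +
        (∑ b, π b * y b) * (π a * (x a - ∑ b, π b * x b)) := fun a => by ring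
  rw [sum_congr rfl fun a _ => hsplit a, sum_add_distrib, ← mul_sum, hcentered, mul_zero,
    add_zero, weightedCov]

variable [Nonempty A] {β : ℝ}

theorem sum_exp_div_pos (β : ℝ) (q : A → ℝ) : 0 < ∑ a, exp (q a / β) :=
  sum_pos (fun _ _ => exp_pos _) univ_nonempty

theorem softmax_mem_stdSimplex (β : ℝ) (q : A → ℝ) : softmax β q ∈ stdSimplex ℝ A := by
  refine ⟨fun a => div_nonneg (exp_pos _).le (sum_exp_div_pos β q).le, ?_⟩
  simp only [softmax]
  rw [← sum_div, div_self (sum_exp_div_pos β q).ne']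

theorem logSumExp_add_const (hβ : β ≠ 0) (q : A → ℝ) (c : ℝ) :
    logSumExp β (fun a => q a + c) = logSumExp β q + c := by
  simp only [logSumExp, add_div, exp_add, ← sum_mul]
  rw [log_mul (sum_exp_div_pos β q).ne' (exp_pos _).ne', log_exp]
  field_simp

theorem logSumExp_mono (hβ : 0 < β) : Monotone (logSumExp β : (A → ℝ) → ℝ) := fun q q' h => by
  unfold logSumExp
  gcongr with a
  exact h a

theorem lipschitzWith_logSumExp (hβ : 0 < β) : LipschitzWith 1 (logSumExp β : (A → ℝ) → ℝ) := by
  refine LipschitzWith.of_le_add_mul 1 fun q q' => ?_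
  rw [NNReal.coe_one, one_mul, ← logSumExp_add_const hβ.ne']
  refine logSumExp_mono hβ fun a => ?_
  have h := dist_le_pi_dist q q' a
  rw [Real.dist_eq] at h
  linarith [le_abs_self (q a - q' a)]

theorem contDiff_logSumExp {n : WithTop ℕ∞} : ContDiff ℝ n (logSumExp β : (A → ℝ) → ℝ) :=
  contDiff_const.mul <| (ContDiff.sum fun a _ =>
    (contDiff_apply ℝ ℝ a).div_const β |>.exp).log fun q => (sum_exp_div_pos β q).ne'

variable {q : A → ℝ → ℝ} {q' : A → ℝ} {t : ℝ}

theorem hasDerivAt_logSumExp (hβ : β ≠ 0) (hq : ∀ a, HasDerivAt (q a) (q' a) t) :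
    HasDerivAt (fun t => logSumExp β fun a => q a t)
      (∑ a, softmax β (fun a => q a t) a * q' a) t := by
  have hS := HasDerivAt.fun_sum fun a (_ : a ∈ univ) => ((hq a).div_const β).exp
  refine ((hS.log (sum_exp_div_pos β (q · t)).ne').const_mul β).congr_deriv ?_
  simp only [softmax, div_mul_eq_mul_div, ← sum_div]
  field_simp
  rw [← sum_div]
  field_simp

theorem hasDerivAt_softmax (hq : ∀ a, HasDerivAt (q a) (q' a) t) (a : A) :
    HasDerivAt (fun t => softmax β (fun a => q a t) a)
      (softmax β (fun a => q a t) a *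
        ((q' a - ∑ b, softmax β (fun b => q b t) b * q' b) / β)) t := by
  have hS := HasDerivAt.fun_sum fun b (_ : b ∈ univ) => ((hq b).div_const β).exp
  refine (((hq a).div_const β).exp.fun_div hS (sum_exp_div_pos β (q · t)).ne').congr_deriv ?_
  simp only [softmax, div_mul_eq_mul_div, ← sum_div]
  field_simp
  rw [mul_sum, ← sum_div]
  ring

end Softmax

section StochasticMatrix

variable {S : Type*} [Fintype S]

theorem abs_sum_mul_le_norm {w : S → ℝ} (hw : w ∈ stdSimplex ℝ S) (x : S → ℝ) :
    |∑ s, w s * x s| ≤ ‖x‖ :=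
  calc |∑ s, w s * x s| ≤ ∑ s, w s * ‖x‖ := by
        refine (abs_sum_le_sum_abs _ _).trans (sum_le_sum fun s _ => ?_)
        rw [abs_mul, abs_of_nonneg (hw.1 s), ← Real.norm_eq_abs]
        exact mul_le_mul_of_nonneg_left (norm_le_pi_norm x s) (hw.1 s)
    _ = ‖x‖ := by rw [← sum_mul, hw.2, one_mul]

variable [DecidableEq S] {P : Matrix S S ℝ} {γ : ℝ}

theorem Matrix.norm_mulVec_le_of_mem_rowStochastic (hP : P ∈ rowStochastic ℝ S) (x : S → ℝ) :
    ‖P *ᵥ x‖ ≤ ‖x‖ :=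
  (pi_norm_le_iff_of_nonneg (norm_nonneg x)).2 fun s => by
    rw [Real.norm_eq_abs]
    exact abs_sum_mul_le_norm ⟨fun s' => hP.1 s s', sum_row_of_mem_rowStochastic hP s⟩ x

theorem Matrix.isUnit_one_sub_smul_of_mem_rowStochastic (hP : P ∈ rowStochastic ℝ S)
    (hγ0 : 0 ≤ γ) (hγ1 : γ < 1) : IsUnit (1 - γ • P) := by
  refine mulVec_injective_iff_isUnit.1 fun x y hxy => sub_eq_zero.1 (norm_le_zero_iff.1 ?_)
  have hfix : x - y = γ • P *ᵥ (x - y) := by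
    rw [sub_mulVec, sub_mulVec, one_mulVec, one_mulVec, sub_eq_sub_iff_sub_eq_sub] at hxy
    conv_lhs => rw [hxy]
    rw [← mulVec_sub, smul_mulVec]
  have hle : ‖x - y‖ ≤ γ * ‖x - y‖ := by
    calc ‖x - y‖ = γ * ‖P *ᵥ (x - y)‖ := by
          conv_lhs => rw [hfix]
          rw [norm_smul, Real.norm_of_nonneg hγ0]
      _ ≤ γ * ‖x - y‖ := by gcongr; exact norm_mulVec_le_of_mem_rowStochastic hP _
  nlinarith [norm_nonneg (x - y)]

theorem Matrix.eq_inv_mulVec_of_eq_add_smul_mulVec (hP : P ∈ rowStochastic ℝ S)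
    (hγ0 : 0 ≤ γ) (hγ1 : γ < 1) {x b : S → ℝ} (hx : x = b + γ • P *ᵥ x) :
    x = (1 - γ • P)⁻¹ *ᵥ b := by
  have := (isUnit_one_sub_smul_of_mem_rowStochastic hP hγ0 hγ1).invertible
  refine (inv_mulVec_eq_vec ?_).symm
  rw [sub_mulVec, one_mulVec, smul_mulVec, eq_sub_iff_add_eq, ← hx]

end StochasticMatrix

section SoftMDP

variable {S A ι : Type*} [Fintype ι]

noncomputable def linearReward (r : S → A → ι → ℝ) (θ : ι → ℝ) (s : S) (a : A) : ℝ :=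
  ∑ i, θ i * r s a i

theorem linearReward_single [DecidableEq ι] (r : S → A → ι → ℝ) (i : ι) :
    linearReward r (Pi.single i 1) = fun s a => r s a i := by
  ext s a
  simp [linearReward, Pi.single_apply]

theorem hasDerivAt_linearReward_line (r : S → A → ι → ℝ) (θ w : ι → ℝ) (s : S) (a : A)
    (t : ℝ) : HasDerivAt (fun t => linearReward r (θ + t • w) s a) (linearReward r w s a) t := by
  have h : ∀ t : ℝ,
      linearReward r (θ + t • w) s a = linearReward r θ s a + t * linearReward r w s a := by
    intro t
    simp only [linearReward, Pi.add_apply, Pi.smul_apply, smul_eq_mul, add_mul, sum_add_distrib,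
      mul_sum, mul_assoc]
  simp only [h]
  simpa using ((hasDerivAt_id t).mul_const _).const_add (linearReward r θ s a)

variable [Fintype S] (T : S → A → S → ℝ) (γ : ℝ)

noncomputable def actionValue (c : S → A → ℝ) (v : S → ℝ) (s : S) (a : A) : ℝ :=
  c s a + γ * ∑ s', T s a s' * v s'

noncomputable def softQ (r : S → A → ι → ℝ) (V : (ι → ℝ) → S → ℝ) (θ : ι → ℝ) : S → A → ℝ :=
  actionValue T γ (linearReward r θ) (V θ)

variable {T γ} {r : S → A → ι → ℝ} {V : (ι → ℝ) → S → ℝ}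

theorem hasDerivAt_actionValue {c : ℝ → S → A → ℝ} {c' : S → A → ℝ} {v : ℝ → S → ℝ}
    {v' : S → ℝ} {t : ℝ} {s : S} {a : A} (hc : HasDerivAt (fun t => c t s a) (c' s a) t)
    (hv : HasDerivAt v v' t) :
    HasDerivAt (fun t => actionValue T γ (c t) (v t) s a) (actionValue T γ c' v' s a) t :=
  hc.add ((HasDerivAt.fun_sum fun s' _ =>
    (hasDerivAt_pi.1 hv s').const_mul (T s a s')).const_mul γ)

theorem hasDerivAt_softQ_line {θ : ι → ℝ} (hV : DifferentiableAt ℝ V θ) (u : ι → ℝ) (s : S)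
    (a : A) : HasDerivAt (fun t : ℝ => softQ T γ r V (θ + t • u) s a)
      (actionValue T γ (linearReward r u) (fderiv ℝ V θ u) s a) 0 :=
  hasDerivAt_actionValue (hasDerivAt_linearReward_line r θ u s a 0)
    (hV.hasFDerivAt.hasLineDerivAt u)

variable [Fintype A]

theorem fderiv_softQ_apply {θ : ι → ℝ} (hV : DifferentiableAt ℝ V θ) (u : ι → ℝ) (s : S)
    (a : A) : fderiv ℝ (softQ T γ r V) θ u s a =
      actionValue T γ (linearReward r u) (fderiv ℝ V θ u) s a := by
  have hQ : DifferentiableAt ℝ (softQ T γ r V) θ := by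
    unfold softQ actionValue linearReward
    fun_prop
  exact (hasDerivAt_pi.1 (hasDerivAt_pi.1 (hQ.hasFDerivAt.hasLineDerivAt u) s) a).unique
    (hasDerivAt_softQ_line hV u s a)

variable (T) in
noncomputable def policyTransition (π : S → A → ℝ) : Matrix S S ℝ :=
  Matrix.of fun s s' => ∑ a, π s a * T s a s'

variable {π : S → A → ℝ}

theorem policyTransition_mem_rowStochastic [DecidableEq S]
    (hT : ∀ s a, T s a ∈ stdSimplex ℝ S) (hπ : ∀ s, π s ∈ stdSimplex ℝ A) :
    policyTransition T π ∈ Matrix.rowStochastic ℝ S := by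
  refine Matrix.mem_rowStochastic_iff_sum.2
    ⟨fun s s' => sum_nonneg fun a _ => mul_nonneg ((hπ s).1 a) ((hT s a).1 s'), fun s => ?_⟩
  simp only [policyTransition, Matrix.of_apply]
  rw [sum_comm]
  simp only [← mul_sum, (hT _ _).2, mul_one, (hπ s).2]

theorem sum_mul_actionValue (c : S → A → ℝ) (v : S → ℝ) (s : S) :
    ∑ a, π s a * actionValue T γ c v s a =
      ∑ a, π s a * c s a + γ * (policyTransition T π *ᵥ v) s := by
  simp only [actionValue, policyTransition, Matrix.mulVec, dotProduct, Matrix.of_apply, mul_add,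
    sum_add_distrib, sum_mul, mul_sum]
  rw [sum_comm]
  congr 1
  exact sum_congr rfl fun s' _ => sum_congr rfl fun a _ => by ring

theorem eq_inv_mulVec_of_forall_eq_sum_mul_actionValue [DecidableEq S]
    (hT : ∀ s a, T s a ∈ stdSimplex ℝ S) (hπ : ∀ s, π s ∈ stdSimplex ℝ A) (hγ0 : 0 ≤ γ)
    (hγ1 : γ < 1) {c : S → A → ℝ} {v : S → ℝ}
    (hv : ∀ s, v s = ∑ a, π s a * actionValue T γ c v s a) :
    v = (1 - γ • policyTransition T π)⁻¹ *ᵥ fun s => ∑ a, π s a * c s a := by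
  refine Matrix.eq_inv_mulVec_of_eq_add_smul_mulVec
    (policyTransition_mem_rowStochastic hT hπ) hγ0 hγ1 (funext fun s => ?_)
  rw [hv s, sum_mul_actionValue]
  rfl

variable (T γ) in
noncomputable def softBellman (β : ℝ) (c : S → A → ℝ) (v : S → ℝ) (s : S) : ℝ :=
  logSumExp β (actionValue T γ c v s)

variable (T γ) in
noncomputable def softPolicy (β : ℝ) (r : S → A → ι → ℝ) (V : (ι → ℝ) → S → ℝ) (θ : ι → ℝ)
    (s : S) : A → ℝ :=
  softmax β (softQ T γ r V θ s)

variable {β : ℝ} [Nonempty A]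

theorem softPolicy_mem_stdSimplex (θ : ι → ℝ) (s : S) :
    softPolicy T γ β r V θ s ∈ stdSimplex ℝ A :=
  softmax_mem_stdSimplex β _

theorem lipschitzWith_softBellman (hT : ∀ s a, T s a ∈ stdSimplex ℝ S) (hγ0 : 0 ≤ γ)
    (hβ : 0 < β) (c : S → A → ℝ) :
    LipschitzWith ⟨γ, hγ0⟩ (softBellman T γ β c) := by
  refine LipschitzWith.of_dist_le_mul fun v w => (dist_pi_le_iff (by positivity)).2 fun s => ?_
  refine ((lipschitzWith_logSumExp hβ).dist_le_mul (actionValue T γ c v s)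
    (actionValue T γ c w s)).trans ?_
  rw [NNReal.coe_one, one_mul]
  refine (dist_pi_le_iff (by positivity)).2 fun a => ?_
  rw [Real.dist_eq, actionValue, actionValue, add_sub_add_left_eq_sub, ← mul_sub, abs_mul,
    abs_of_nonneg hγ0, ← sum_sub_distrib, dist_eq_norm]
  refine mul_le_mul_of_nonneg_left ?_ hγ0
  simpa only [Pi.sub_apply, mul_sub] using abs_sum_mul_le_norm (hT s a) (v - w)

theorem contDiff_of_forall_eq_softBellman (hT : ∀ s a, T s a ∈ stdSimplex ℝ S) (hγ0 : 0 ≤ γ)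
    (hγ1 : γ < 1) (hβ : 0 < β)
    (hV : ∀ θ, V θ = softBellman T γ β (linearReward r θ) (V θ)) : ContDiff ℝ ∞ V := by
  have hΦ : ContDiff ℝ ∞ fun x : (ι → ℝ) × (S → ℝ) =>
      softBellman T γ β (linearReward r x.1) x.2 := by
    refine contDiff_pi.2 fun s => contDiff_logSumExp.comp (contDiff_pi.2 fun a => ?_)
    unfold actionValue linearReward
    fun_prop
  exact contDiff_of_isFixedPt_of_lipschitzWith (K := ⟨γ, hγ0⟩) (NNReal.coe_lt_coe.1 hγ1)
    (by simp) hΦ (fun θ => lipschitzWith_softBellman hT hγ0 hβ (linearReward r θ))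
    fun θ => (hV θ).symm

theorem fderiv_apply_eq_sum_softPolicy_mul (hβ : β ≠ 0)
    (hV : ∀ θ, V θ = softBellman T γ β (linearReward r θ) (V θ)) {θ : ι → ℝ}
    (hVd : DifferentiableAt ℝ V θ) (w : ι → ℝ) (s : S) :
    fderiv ℝ V θ w s =
      ∑ a, softPolicy T γ β r V θ s a * fderiv ℝ (softQ T γ r V) θ w s a := by
  have hlse := hasDerivAt_logSumExp hβ fun a =>
    hasDerivAt_softQ_line (T := T) (γ := γ) (r := r) hVd w s a
  simp only [zero_smul, add_zero] at hlse
  have hVline := hasDerivAt_pi.1 (hVd.hasFDerivAt.hasLineDerivAt w) s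
  rw [hVline.unique (hlse.congr_of_eventuallyEq (.of_forall fun t => congrFun (hV _) s))]
  simp only [fderiv_softQ_apply hVd]
  rfl

theorem fderiv_eq_inv_mulVec [DecidableEq S] (hT : ∀ s a, T s a ∈ stdSimplex ℝ S)
    (hγ0 : 0 ≤ γ) (hγ1 : γ < 1) (hβ : β ≠ 0)
    (hV : ∀ θ, V θ = softBellman T γ β (linearReward r θ) (V θ)) {θ : ι → ℝ}
    (hVd : DifferentiableAt ℝ V θ) (w : ι → ℝ) :
    fderiv ℝ V θ w = (1 - γ • policyTransition T (softPolicy T γ β r V θ))⁻¹ *ᵥ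
      fun s => ∑ a, softPolicy T γ β r V θ s a * linearReward r w s a := by
  refine eq_inv_mulVec_of_forall_eq_sum_mul_actionValue hT (softPolicy_mem_stdSimplex θ) hγ0 hγ1
    fun s => ?_
  rw [fderiv_apply_eq_sum_softPolicy_mul hβ hV hVd w s]
  simp only [fderiv_softQ_apply hVd]

theorem fderiv_fderiv_apply_eq_sum_softPolicy_mul (hβ : β ≠ 0)
    (hV : ∀ θ, V θ = softBellman T γ β (linearReward r θ) (V θ)) (hV2 : ContDiff ℝ 2 V)
    (θ u w : ι → ℝ) (s : S) :
    fderiv ℝ (fun x => fderiv ℝ V x w) θ u s =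
      ∑ a, softPolicy T γ β r V θ s a * actionValue T γ
        (fun s a => (fderiv ℝ (softQ T γ r V) θ u s a -
          ∑ b, softPolicy T γ β r V θ s b * fderiv ℝ (softQ T γ r V) θ u s b) / β *
            fderiv ℝ (softQ T γ r V) θ w s a)
        (fderiv ℝ (fun x => fderiv ℝ V x w) θ u) s a := by
  have hVd : Differentiable ℝ V := hV2.differentiable two_ne_zero
  have hgline : HasDerivAt (fun t : ℝ => fderiv ℝ V (θ + t • u) w)
      (fderiv ℝ (fun x => fderiv ℝ V x w) θ u) 0 :=
    (((hV2.fderiv_right le_rfl).clm_apply contDiff_const).differentiable one_ne_zero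
      θ).hasFDerivAt.hasLineDerivAt u
  have hgx : ∀ x, fderiv ℝ V x w s = ∑ a, softPolicy T γ β r V x s a *
      actionValue T γ (linearReward r w) (fderiv ℝ V x w) s a := by
    intro x
    rw [fderiv_apply_eq_sum_softPolicy_mul hβ hV (hVd x)]
    simp only [fderiv_softQ_apply (hVd x)]
  have hπline := hasDerivAt_softmax (β := β) fun a =>
    hasDerivAt_softQ_line (T := T) (γ := γ) (r := r) (hVd θ) u s a
  have hQwline : ∀ a, HasDerivAt
      (fun t : ℝ => actionValue T γ (linearReward r w) (fderiv ℝ V (θ + t • u) w) s a)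
      (actionValue T γ 0 (fderiv ℝ (fun x => fderiv ℝ V x w) θ u) s a) 0 :=
    fun a => hasDerivAt_actionValue (hasDerivAt_const _ _) hgline
  -- differentiate `hgx` along `t ↦ θ + t • u` by the product rule
  have hsum := HasDerivAt.fun_sum fun a (_ : a ∈ univ) => (hπline a).mul (hQwline a)
  rw [(hasDerivAt_pi.1 hgline s).unique (hsum.congr_of_eventuallyEq (.of_forall fun t => hgx _))]
  simp only [zero_smul, add_zero, ← fderiv_softQ_apply (hVd θ)]
  refine sum_congr rfl fun a _ => ?_
  simp only [actionValue, Pi.zero_apply]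
  unfold softPolicy
  ring

theorem fderiv_fderiv_eq_inv_mulVec [DecidableEq S] (hT : ∀ s a, T s a ∈ stdSimplex ℝ S)
    (hγ0 : 0 ≤ γ) (hγ1 : γ < 1) (hβ : β ≠ 0)
    (hV : ∀ θ, V θ = softBellman T γ β (linearReward r θ) (V θ)) (hV2 : ContDiff ℝ 2 V)
    (θ u w : ι → ℝ) :
    fderiv ℝ (fun x => fderiv ℝ V x w) θ u =
      (1 - γ • policyTransition T (softPolicy T γ β r V θ))⁻¹ *ᵥ fun s =>
        weightedCov (softPolicy T γ β r V θ s) (fderiv ℝ (softQ T γ r V) θ u s)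
          (fderiv ℝ (softQ T γ r V) θ w s) / β := by
  rw [eq_inv_mulVec_of_forall_eq_sum_mul_actionValue hT (softPolicy_mem_stdSimplex θ) hγ0 hγ1
    (fderiv_fderiv_apply_eq_sum_softPolicy_mul hβ hV hV2 θ u w)]
  congr 1
  funext s
  rw [← sum_mul_sub_mean_mul_eq_weightedCov (softPolicy_mem_stdSimplex θ s).2, sum_div]
  exact sum_congr rfl fun a _ => by ring

end SoftMDP

/-- Hessian of the soft fixed point (Proposition 3.5).  With `V θ` the fixed point of
the soft Bellman operator `T_θ`, `π` the softmax policy at parameter `θ`, `W` the unique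
solution of the vector Bellman evaluation equation for `π`, `Qvec` the vector
action-value function, `B s` the covariance matrix of `Qvec s ·` under `π(·|s)`, and
`Tpi` the induced state-transition matrix, the map `θ' ↦ V θ' s` is twice (continuously)
differentiable for each state `s`, and its Hessian at `θ` is
`H[V(θ)(s_k)] = (1/β) Σ_l [(I − γ Tπ)⁻¹]_{kl} B(s_l)`. -/
theorem stmt_7 {p n : ℕ} {A : Type*} [Fintype A] [Nonempty A]
    (T : Fin p → A → Fin p → ℝ)
    (hT0 : ∀ s a s', 0 ≤ T s a s') (hT1 : ∀ s a, ∑ s', T s a s' = 1)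
    (γ : ℝ) (hγ0 : 0 ≤ γ) (hγ1 : γ < 1)
    (β : ℝ) (hβ : 0 < β)
    (r : Fin p → A → Fin n → ℝ)
    (V : (Fin n → ℝ) → Fin p → ℝ)
    (hV : ∀ θ s, V θ s = β * Real.log (∑ a : A, Real.exp
      ((∑ i, θ i * r s a i + γ * ∑ s', T s a s' * V θ s') / β)))
    (θ : Fin n → ℝ)
    (Q : Fin p → A → ℝ)
    (hQ : ∀ s a, Q s a = ∑ i, θ i * r s a i + γ * ∑ s', T s a s' * V θ s')
    (π : Fin p → A → ℝ)
    (hπ : ∀ s a, π s a = Real.exp (Q s a / β) / ∑ a', Real.exp (Q s a' / β))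
    (W : Fin p → Fin n → ℝ)
    (hW : ∀ s i, W s i = ∑ a, π s a * (r s a i + γ * ∑ s', T s a s' * W s' i))
    (Qvec : Fin p → A → Fin n → ℝ)
    (hQvec : ∀ s a i, Qvec s a i = r s a i + γ * ∑ s', T s a s' * W s' i)
    (Qbar : Fin p → Fin n → ℝ)
    (hQbar : ∀ s i, Qbar s i = ∑ a, π s a * Qvec s a i)
    (B : Fin p → Matrix (Fin n) (Fin n) ℝ)
    (hB : ∀ s i j, B s i j = ∑ a, π s a *
      ((Qvec s a i - Qbar s i) * (Qvec s a j - Qbar s j)))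
    (Tpi : Matrix (Fin p) (Fin p) ℝ)
    (hTpi : ∀ i j, Tpi i j = ∑ a, π i a * T i a j) :
    (∀ s, ContDiff ℝ 2 (fun θ' => V θ' s)) ∧
    ∀ (k : Fin p) (i j : Fin n),
      iteratedFDeriv ℝ 2 (fun θ' => V θ' k) θ ![Pi.single i 1, Pi.single j 1]
        = (1 / β) * ∑ l, (1 - γ • Tpi)⁻¹ k l * B l i j := by
  have hT : ∀ s a, T s a ∈ stdSimplex ℝ (Fin p) := fun s a => ⟨hT0 s a, hT1 s a⟩
  have hV' : ∀ θ, V θ = softBellman T γ β (linearReward r θ) (V θ) := fun θ => funext (hV θ)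
  have hV2 : ContDiff ℝ 2 V :=
    (contDiff_of_forall_eq_softBellman hT hγ0 hγ1 hβ hV').of_le (by norm_cast)
  have hVd : DifferentiableAt ℝ V θ := hV2.differentiable two_ne_zero θ
  refine ⟨fun s => contDiff_pi.1 hV2 s, fun k i j => ?_⟩
  have hπ' : softPolicy T γ β r V θ = π := by
    funext s a
    rw [hπ, show Q s = softQ T γ r V θ s from funext (hQ s)]
    rfl
  obtain rfl : Tpi = policyTransition T π := Matrix.ext hTpi
  have hgrad : ∀ j, fderiv ℝ V θ (Pi.single j 1) = fun s => W s j := fun j => by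
    rw [fderiv_eq_inv_mulVec hT hγ0 hγ1 hβ.ne' hV' hVd, hπ',
      eq_inv_mulVec_of_forall_eq_sum_mul_actionValue hT (hπ' ▸ softPolicy_mem_stdSimplex θ) hγ0
        hγ1 fun s => hW s j, linearReward_single]
  have hdQ : ∀ i s, fderiv ℝ (softQ T γ r V) θ (Pi.single i 1) s = fun a => Qvec s a i :=
    fun i s => funext fun a => by
      rw [fderiv_softQ_apply hVd, linearReward_single, hgrad, hQvec]
      rfl
  have hcov : ∀ l, B l i j = weightedCov (π l) (Qvec l · i) (Qvec l · j) := fun l => by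
    simp only [hB, hQbar]
    rfl
  rw [iteratedFDeriv_two_apply_eval hV2, fderiv_fderiv_eq_inv_mulVec hT hγ0 hγ1 hβ.ne' hV' hV2,
    hπ']
  simp only [Matrix.mulVec, dotProduct, hdQ, hcov, mul_sum]
  exact sum_congr rfl fun l _ => by ring
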